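/- arXiv:1903.01157 — 2 statements merged into one kernel-verified Lean document; each statement's English description precedes it below -/
import Mathlib

section
/- For every nonnegative integer M, the quadruple sum over nonnegative integers N, m, n1, n2 of C(M,N) * C(3(N-m-n1-n2), m) * C(N-m-n1-n2 + floor(n1/2), floor(n1/2)) * C(N-m-n1-n2 + floor(n2/2), floor(n2/2)) equals 4^M. -/
/-!
Fix `N` and put `k = N - m - n₁ - n₂`. As `∑ₙ C(k + ⌊n/2⌋, ⌊n/2⌋) xⁿ = 1 / ((1 - x)(1 - x²)ᵏ)`
and `∑ₘ C(3k, m) xᵐ = (1 + x)^(3k)`, the inner triple sum is the coefficient of `x^N` in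
`∑ₖ xᵏ (1 + x)^(3k) / ((1 - x)²(1 - x²)^(2k)) = (1 - x)⁻² ∑ₖ yᵏ` with `y = x(1 + x) / (1 - x)²`.
Since `(1 - x)²(1 - y) = 1 - 3x`, this series is `1 / (1 - 3x)`, so the inner sum is `3^N`, and
the binomial theorem gives `∑_N C(M, N) 3^N = 4^M`. Cutting the `k`-sum off at `N` changes only
coefficients beyond `x^N`, so finite sums of power series suffice.
-/

open Finset PowerSeries

theorem Finset.sum_range_ite_add_eq {M : Type*} [AddCommMonoid M] {n N : ℕ} (hn : n ≤ N)
    (c : ℕ) (f : ℕ → M) :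
    ∑ k ∈ range (N + 1), (if c + k = n then f k else 0) = if c ≤ n then f (n - c) else 0 := by
  split_ifs with hc
  · rw [sum_eq_single (n - c) (fun k _ hk => if_neg (by omega)) (fun h => by simp at h; omega)]
    exact if_pos (by omega)
  · exact sum_eq_zero fun k _ => if_neg (by omega)

namespace PowerSeries

section CommSemiring

variable {R : Type*} [CommSemiring R]

theorem coeff_mul_eq_sum_range_ite {n N : ℕ} (hn : n ≤ N) (φ ψ : R⟦X⟧) :
    coeff n (φ * ψ) = ∑ i ∈ range (N + 1), ∑ j ∈ range (N + 1),
      if i + j = n then coeff i φ * coeff j ψ else 0 := by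
  simp_rw [sum_range_ite_add_eq hn, ← sum_filter, coeff_mul,
    Nat.sum_antidiagonal_eq_sum_range_succ_mk]
  congr 1
  ext i
  simp only [mem_range, mem_filter]
  omega

theorem coeff_mul_mul_eq_sum_range_ite {n N : ℕ} (hn : n ≤ N) (φ ψ χ : R⟦X⟧) :
    coeff n (φ * ψ * χ) = ∑ i ∈ range (N + 1), ∑ j ∈ range (N + 1), ∑ l ∈ range (N + 1),
      if i + j + l = n then coeff i φ * coeff j ψ * coeff l χ else 0 := by
  rw [mul_assoc, coeff_mul_eq_sum_range_ite hn]
  refine sum_congr rfl fun i _ => ?_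
  rw [sum_range_ite_add_eq hn]
  split_ifs with hi
  · rw [coeff_mul_eq_sum_range_ite (by omega : n - i ≤ N), mul_sum]
    refine sum_congr rfl fun j _ => ?_
    rw [mul_sum]
    refine sum_congr rfl fun l _ => ?_
    rw [mul_ite_zero, mul_assoc]
    exact if_congr (by omega) rfl rfl
  · exact (sum_eq_zero fun j _ => sum_eq_zero fun l _ => if_neg (by omega)).symm

theorem coeff_one_add_X_pow (n k : ℕ) : coeff k ((1 + X : R⟦X⟧) ^ n) = n.choose k := by
  rw [← Polynomial.coeff_one_add_X_pow R n k, ← Polynomial.coeff_coe]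
  push_cast
  rfl

end CommSemiring

variable {R : Type*} [CommRing R]

theorem coeff_eq_pow_of_one_sub_C_mul_X_mul_eq {a : R} {S T : R⟦X⟧} {N : ℕ}
    (h : (1 - C a * X) * S = 1 - X ^ (N + 1) * T) : coeff N S = a ^ N := by
  have hinv : rescale a (mk 1) * (1 - C a * X) = 1 := by
    simpa [rescale_X] using congrArg (rescale a) (mk_one_mul_one_sub_eq_one R)
  calc coeff N S = coeff N (rescale a (mk 1) * (1 - X ^ (N + 1) * T)) := by
        rw [← h, ← mul_assoc, hinv, one_mul]
    _ = a ^ N := by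
        rw [mul_sub, mul_one, map_sub, mul_left_comm, coeff_X_pow_mul', if_neg (by omega),
          coeff_rescale]
        simp

variable (R) in
noncomputable def halfChooseSeries (k : ℕ) : R⟦X⟧ :=
  mk fun n => ((k + n / 2).choose (n / 2) : R)

theorem halfChooseSeries_zero : halfChooseSeries R 0 = mk 1 := by
  ext n
  simp [halfChooseSeries]

theorem one_sub_X_sq_mul_halfChooseSeries_succ (k : ℕ) :
    (1 - X ^ 2) * halfChooseSeries R (k + 1) = halfChooseSeries R k := by
  ext n
  rw [sub_mul, one_mul, map_sub, coeff_X_pow_mul']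
  rcases lt_or_ge n 2 with hn | hn
  · simp [halfChooseSeries, hn, Nat.div_eq_of_lt hn]
  · obtain ⟨j, rfl⟩ := Nat.exists_eq_add_of_le' hn
    have hj : (j + 2) / 2 = j / 2 + 1 := by omega
    simp only [halfChooseSeries, coeff_mk, if_pos hn, Nat.add_sub_cancel, hj]
    rw [show k + 1 + (j / 2 + 1) = (k + 1 + j / 2) + 1 by ring, Nat.choose_succ_succ',
      show k + 1 + j / 2 = k + (j / 2 + 1) by ring]
    push_cast
    ring

theorem halfChooseSeries_mul_one_add_X_pow (k : ℕ) :
    halfChooseSeries R k * (1 + X) ^ k = mk 1 ^ (k + 1) := by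
  induction k with
  | zero => simp [halfChooseSeries_zero]
  | succ k ih =>
    linear_combination (-(halfChooseSeries R (k + 1) * (1 + X) ^ (k + 1))) *
        mk_one_mul_one_sub_eq_one R +
      mk 1 * (1 + X) ^ k * one_sub_X_sq_mul_halfChooseSeries_succ (R := R) k + mk 1 * ih

variable (R) in
noncomputable def truncatedGF (N : ℕ) : R⟦X⟧ :=
  ∑ k ∈ range (N + 1), X ^ k * ((1 + X) ^ (3 * k) * halfChooseSeries R k * halfChooseSeries R k)

theorem X_pow_mul_one_add_X_pow_mul_halfChooseSeries_mul_self (k : ℕ) :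
    X ^ k * ((1 + X) ^ (3 * k) * halfChooseSeries R k * halfChooseSeries R k) =
      (X * (1 + X) * mk 1 ^ 2) ^ k * mk 1 ^ 2 := by
  calc _ = X ^ k * (1 + X) ^ k * (halfChooseSeries R k * (1 + X) ^ k) ^ 2 := by ring
    _ = _ := by rw [halfChooseSeries_mul_one_add_X_pow, mul_pow, mul_pow]; ring

theorem one_sub_three_X_mul_truncatedGF (N : ℕ) :
    (1 - C 3 * X) * truncatedGF R N = 1 - X ^ (N + 1) * ((1 + X) * mk 1 ^ 2) ^ (N + 1) := by
  have hy : (1 - C 3 * X) * (mk 1 : R⟦X⟧) ^ 2 = 1 - X * (1 + X) * mk 1 ^ 2 := by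
    rw [map_ofNat]
    linear_combination (mk 1 * (1 - X) + 1) * mk_one_mul_one_sub_eq_one R
  simp_rw [truncatedGF, X_pow_mul_one_add_X_pow_mul_halfChooseSeries_mul_self, ← sum_mul]
  rw [mul_comm _ (mk 1 ^ 2), ← mul_assoc, hy, mul_neg_geom_sum, mul_assoc X, mul_pow]

theorem coeff_truncatedGF_eq_three_pow (N : ℕ) : coeff N (truncatedGF R N) = 3 ^ N :=
  coeff_eq_pow_of_one_sub_C_mul_X_mul_eq (one_sub_three_X_mul_truncatedGF N)

theorem coeff_truncatedGF_eq_sum (N : ℕ) :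
    coeff N (truncatedGF R N) =
      ((∑ m ∈ range (N + 1), ∑ n1 ∈ range (N + 1), ∑ n2 ∈ range (N + 1),
        if m + n1 + n2 ≤ N then
          (3 * (N - m - n1 - n2)).choose m * (N - m - n1 - n2 + n1 / 2).choose (n1 / 2) *
            (N - m - n1 - n2 + n2 / 2).choose (n2 / 2)
        else 0 : ℕ) : R) := by
  calc coeff N (truncatedGF R N) = ∑ k ∈ range (N + 1), ∑ m ∈ range (N + 1),
        ∑ n1 ∈ range (N + 1), ∑ n2 ∈ range (N + 1), if m + n1 + n2 + k = N then
          ((3 * k).choose m : R) * ((k + n1 / 2).choose (n1 / 2) : R) *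
            ((k + n2 / 2).choose (n2 / 2) : R) else 0 := by
        rw [truncatedGF, map_sum]
        refine sum_congr rfl fun k hk => ?_
        have hkN := mem_range.1 hk
        rw [coeff_X_pow_mul', if_pos (by omega),
          coeff_mul_mul_eq_sum_range_ite (N := N) (by omega)]
        simp only [coeff_one_add_X_pow, halfChooseSeries, coeff_mk]
        exact sum_congr rfl fun m _ => sum_congr rfl fun n1 _ => sum_congr rfl fun n2 _ =>
          if_congr (by omega) rfl rfl
    _ = _ := by
        push_cast
        rw [sum_comm]
        refine sum_congr rfl fun m _ => ?_
        rw [sum_comm]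
        refine sum_congr rfl fun n1 _ => ?_
        rw [sum_comm]
        refine sum_congr rfl fun n2 _ => ?_
        rw [sum_range_ite_add_eq le_rfl]
        simp only [Nat.sub_add_eq]

end PowerSeries

theorem sum_choose_mul_choose_half_mul_choose_half_eq_three_pow (N : ℕ) :
    ∑ m ∈ range (N + 1), ∑ n1 ∈ range (N + 1), ∑ n2 ∈ range (N + 1),
      (if m + n1 + n2 ≤ N then
        (3 * (N - m - n1 - n2)).choose m * (N - m - n1 - n2 + n1 / 2).choose (n1 / 2) *
          (N - m - n1 - n2 + n2 / 2).choose (n2 / 2)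
      else 0) = 3 ^ N := by
  have h := coeff_truncatedGF_eq_sum (R := ℤ) N
  rw [coeff_truncatedGF_eq_three_pow] at h
  exact_mod_cast h.symm

theorem schur_q_eq_one_identity_four (M : ℕ) :
    ∑ N ∈ range (M + 1), ∑ m ∈ range (N + 1), ∑ n1 ∈ range (N + 1), ∑ n2 ∈ range (N + 1),
      (if m + n1 + n2 ≤ N then
        Nat.choose M N *
          Nat.choose (3 * (N - m - n1 - n2)) m *
          Nat.choose (N - m - n1 - n2 + n1 / 2) (n1 / 2) *
          Nat.choose (N - m - n1 - n2 + n2 / 2) (n2 / 2)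
      else 0) = 4 ^ M := by
  simp_rw [mul_assoc (M.choose _), ← mul_ite_zero _ (M.choose _), ← mul_sum,
    sum_choose_mul_choose_half_mul_choose_half_eq_three_pow]
  rw [show 4 = 3 + 1 by rfl, add_pow]
  exact sum_congr rfl fun N _ => by rw [one_pow, Nat.cast_id]; ring
end

section
/- For complex q with |q| < 1, the limit as N → ∞ of Σ_{k=0}^{N} q^k · [N choose k]_{q³} · (-q²; q³)_{N-k} equals 1 / ((q²; q³)_∞ · (q; q⁶)_∞). -/
/-! Writing the Gaussian binomial as `(Q;Q)_N / ((Q;Q)_k (Q;Q)_{N-k})` with `Q = q³`, the `k`-th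
summand tends to `q^k (-q²;q³)_∞ / (q³;q³)_k` as `N → ∞` and is dominated by a multiple of `‖q‖^k`,
because `(a;Q)_n` and `(Q;Q)_n⁻¹` converge and hence are bounded in `n`. Dominated convergence and
Euler's identity `e(z) := ∑ z^k / (Q;Q)_k = 1 / (z;Q)_∞` (iterate `(1 - z) e(z) = e(Qz)` and use
`e(Q^n z) → 1`) give the limit `(-q²;q³)_∞ / (q;q³)_∞`. Finally
`(-q²;q³)_∞ (q²;q³)_∞ = (q⁴;q⁶)_∞` and `(q;q³)_∞ = (q;q⁶)_∞ (q⁴;q⁶)_∞`, the latter by splitting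
into even and odd factors. -/

open Finset Filter

/-- The finite q-Pochhammer symbol `(a; Q)_n = ∏_{i=0}^{n-1} (1 - a Q^i)`. -/
noncomputable def qPoch (a Q : ℂ) (n : ℕ) : ℂ :=
  ∏ i ∈ range n, (1 - a * Q ^ i)

open Topology

noncomputable def qPochInf (a Q : ℂ) : ℂ :=
  ∏' i : ℕ, (1 - a * Q ^ i)

section Pochhammer

variable {Q : ℂ}

lemma summable_norm_neg_mul_pow (a : ℂ) (hQ : ‖Q‖ < 1) :
    Summable fun i : ℕ => ‖-(a * Q ^ i)‖ := by
  simpa [norm_pow] using (summable_geometric_of_lt_one (norm_nonneg Q) hQ).mul_left ‖a‖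

lemma multipliable_one_sub_mul_pow (a : ℂ) (hQ : ‖Q‖ < 1) :
    Multipliable fun i : ℕ => 1 - a * Q ^ i := by
  simpa only [sub_eq_add_neg] using
    multipliable_one_add_of_summable (summable_norm_neg_mul_pow a hQ)

lemma tendsto_qPoch (a : ℂ) (hQ : ‖Q‖ < 1) :
    Tendsto (qPoch a Q) atTop (𝓝 (qPochInf a Q)) :=
  (multipliable_one_sub_mul_pow a hQ).hasProd.tendsto_prod_nat

lemma one_sub_mul_pow_ne_zero {a : ℂ} (ha : ‖a‖ < 1) (hQ : ‖Q‖ ≤ 1) (i : ℕ) :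
    1 - a * Q ^ i ≠ 0 := by
  refine sub_ne_zero.mpr fun h => ?_
  have : ‖a * Q ^ i‖ < 1 := by
    rw [norm_mul, norm_pow]
    exact mul_lt_one_of_nonneg_of_lt_one_left (norm_nonneg a) ha (pow_le_one₀ (norm_nonneg Q) hQ)
  rw [← h, norm_one] at this
  exact this.false

lemma qPoch_ne_zero {a : ℂ} (ha : ‖a‖ < 1) (hQ : ‖Q‖ ≤ 1) (n : ℕ) : qPoch a Q n ≠ 0 :=
  prod_ne_zero_iff.mpr fun i _ => one_sub_mul_pow_ne_zero ha hQ i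

lemma qPochInf_ne_zero {a : ℂ} (ha : ‖a‖ < 1) (hQ : ‖Q‖ < 1) : qPochInf a Q ≠ 0 := by
  simpa only [qPochInf, sub_eq_add_neg] using tprod_one_add_ne_zero_of_summable
    (fun i => by simpa only [← sub_eq_add_neg] using one_sub_mul_pow_ne_zero ha hQ.le i)
    (summable_norm_neg_mul_pow a hQ)

lemma qPochInf_neg_mul_qPochInf (a : ℂ) (hQ : ‖Q‖ < 1) :
    qPochInf (-a) Q * qPochInf a Q = qPochInf (a ^ 2) (Q ^ 2) := by
  rw [qPochInf, qPochInf, ← (multipliable_one_sub_mul_pow (-a) hQ).tprod_mul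
    (multipliable_one_sub_mul_pow a hQ)]
  exact tprod_congr fun i => by ring

lemma qPochInf_sq_mul_qPochInf_sq (a : ℂ) (hQ : ‖Q‖ < 1) :
    qPochInf a (Q ^ 2) * qPochInf (a * Q) (Q ^ 2) = qPochInf a Q := by
  have hQ2 : ‖Q ^ 2‖ < 1 := by rw [norm_pow]; exact pow_lt_one₀ (norm_nonneg Q) hQ two_ne_zero
  have heven : ∀ i : ℕ, 1 - a * (Q ^ 2) ^ i = 1 - a * Q ^ (2 * i) := fun i => by
    rw [pow_mul]
  have hodd : ∀ i : ℕ, 1 - a * Q * (Q ^ 2) ^ i = 1 - a * Q ^ (2 * i + 1) := fun i => by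
    rw [pow_succ Q (2 * i), pow_mul]; ring
  have he := multipliable_one_sub_mul_pow a hQ2
  have ho := multipliable_one_sub_mul_pow (a * Q) hQ2
  simp only [heven, hodd] at he ho
  simp only [qPochInf, heven, hodd]
  exact tprod_even_mul_odd (f := fun i => 1 - a * Q ^ i) he ho

end Pochhammer

lemma exists_norm_le_of_tendsto {E : Type*} [SeminormedAddCommGroup E] {u : ℕ → E} {x : E}
    (hu : Tendsto u atTop (𝓝 x)) :
    ∃ C, ∀ n, ‖u n‖ ≤ C := by
  obtain ⟨C, hC⟩ := hu.norm.bddAbove_range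
  exact ⟨C, fun n => hC ⟨n, rfl⟩⟩

section Euler

variable {Q z : ℂ}

noncomputable def eulerQExp (Q z : ℂ) : ℂ :=
  ∑' k : ℕ, z ^ k / qPoch Q Q k

lemma exists_norm_inv_qPoch_le (hQ : ‖Q‖ < 1) : ∃ C, ∀ n, ‖(qPoch Q Q n)⁻¹‖ ≤ C :=
  exists_norm_le_of_tendsto ((tendsto_qPoch Q hQ).inv₀ (qPochInf_ne_zero hQ hQ))

lemma summable_pow_div_qPoch (hQ : ‖Q‖ < 1) (hz : ‖z‖ < 1) :
    Summable fun k : ℕ => z ^ k / qPoch Q Q k := by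
  obtain ⟨C, hC⟩ := exists_norm_inv_qPoch_le hQ
  refine .of_norm_bounded ((summable_geometric_of_lt_one (norm_nonneg z) hz).mul_left C)
    fun k => ?_
  rw [div_eq_mul_inv, norm_mul, norm_pow, mul_comm]
  exact mul_le_mul_of_nonneg_right (hC k) (by positivity)

lemma hasSum_eulerQExp (hQ : ‖Q‖ < 1) (hz : ‖z‖ < 1) :
    HasSum (fun k : ℕ => z ^ k / qPoch Q Q k) (eulerQExp Q z) :=
  (summable_pow_div_qPoch hQ hz).hasSum

lemma hasSum_succ_pow_div_qPoch (hQ : ‖Q‖ < 1) (hz : ‖z‖ < 1) :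
    HasSum (fun k : ℕ => z ^ (k + 1) / qPoch Q Q (k + 1)) (eulerQExp Q z - 1) := by
  have h := hasSum_eulerQExp hQ hz
  rw [← hasSum_nat_add_iff' 1] at h
  simpa [qPoch] using h

lemma one_sub_mul_eulerQExp (hQ : ‖Q‖ < 1) (hz : ‖z‖ < 1) :
    (1 - z) * eulerQExp Q z = eulerQExp Q (Q * z) := by
  have hQz : ‖Q * z‖ < 1 := by
    rw [norm_mul]; exact mul_lt_one_of_nonneg_of_lt_one_right hQ.le (norm_nonneg z) hz
  have hdiff : ∀ k : ℕ, z ^ (k + 1) / qPoch Q Q (k + 1) - z * (z ^ k / qPoch Q Q k) =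
      (Q * z) ^ (k + 1) / qPoch Q Q (k + 1) := fun k => by
    have := qPoch_ne_zero hQ hQ.le k
    have := one_sub_mul_pow_ne_zero hQ hQ.le k
    rw [qPoch, prod_range_succ, ← qPoch]
    field_simp
    ring
  have h := ((hasSum_succ_pow_div_qPoch hQ hz).sub
    ((hasSum_eulerQExp hQ hz).mul_left z)).congr_fun fun k => (hdiff k).symm
  linear_combination h.unique (hasSum_succ_pow_div_qPoch hQ hQz)

lemma eulerQExp_mul_qPoch (hQ : ‖Q‖ < 1) (hz : ‖z‖ < 1) (n : ℕ) :
    eulerQExp Q z * qPoch z Q n = eulerQExp Q (Q ^ n * z) := by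
  induction n with
  | zero => simp [qPoch]
  | succ n ih =>
    have hQnz : ‖Q ^ n * z‖ < 1 := by
      rw [norm_mul, norm_pow]
      exact mul_lt_one_of_nonneg_of_lt_one_right (pow_le_one₀ (norm_nonneg Q) hQ.le)
        (norm_nonneg z) hz
    rw [qPoch, prod_range_succ, ← qPoch, ← mul_assoc, ih, pow_succ', mul_assoc,
      ← one_sub_mul_eulerQExp hQ hQnz]
    ring

lemma tendsto_eulerQExp_pow_mul (hQ : ‖Q‖ < 1) (hz : ‖z‖ < 1) :
    Tendsto (fun n => eulerQExp Q (Q ^ n * z)) atTop (𝓝 1) := by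
  obtain ⟨C, hC⟩ := exists_norm_inv_qPoch_le hQ
  have hlim : Tendsto (fun n => Q ^ n * z) atTop (𝓝 0) := by
    simpa using (tendsto_pow_atTop_nhds_zero_of_norm_lt_one hQ).mul_const z
  have hbound : ∀ n k, ‖(Q ^ n * z) ^ k / qPoch Q Q k‖ ≤ C * ‖z‖ ^ k := fun n k => by
    rw [div_eq_mul_inv, norm_mul, norm_pow, mul_comm]
    gcongr
    · exact (norm_nonneg _).trans (hC 0)
    · exact hC k
    · rw [norm_mul, norm_pow]
      exact mul_le_of_le_one_left (norm_nonneg z) (pow_le_one₀ (norm_nonneg Q) hQ.le)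
  have h := tendsto_tsum_of_dominated_convergence
    ((summable_geometric_of_lt_one (norm_nonneg z) hz).mul_left C)
    (fun k => (hlim.pow k).div_const (qPoch Q Q k)) (.of_forall hbound)
  rwa [tsum_eq_single 0 fun k hk => by simp [hk], pow_zero, qPoch, prod_range_zero,
    div_one] at h

theorem eulerQExp_eq_inv_qPochInf (hQ : ‖Q‖ < 1) (hz : ‖z‖ < 1) :
    eulerQExp Q z = (qPochInf z Q)⁻¹ := by
  refine eq_inv_of_mul_eq_one_left (tendsto_nhds_unique ?_ (tendsto_eulerQExp_pow_mul hQ hz))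
  simpa only [eulerQExp_mul_qPoch hQ hz] using (tendsto_qPoch z hQ).const_mul (eulerQExp Q z)

end Euler

theorem tendsto_sum_qBinomial_mul_qPoch {Q z : ℂ} (hQ : ‖Q‖ < 1) (hz : ‖z‖ < 1) (b : ℂ) :
    Tendsto (fun N => ∑ k ∈ range (N + 1),
        z ^ k * (qPoch Q Q N / (qPoch Q Q k * qPoch Q Q (N - k))) * qPoch b Q (N - k))
      atTop (𝓝 (qPochInf b Q / qPochInf z Q)) := by
  -- the `k`-th summand, extended by `0` past `N`; only its last factor depends on `N`
  let f : ℕ → ℕ → ℂ := fun N k => if k ≤ N then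
    z ^ k * (qPoch Q Q k)⁻¹ * (qPoch Q Q N * (qPoch Q Q (N - k))⁻¹ * qPoch b Q (N - k)) else 0
  have hsum : ∀ N, ∑ k ∈ range (N + 1),
      z ^ k * (qPoch Q Q N / (qPoch Q Q k * qPoch Q Q (N - k))) * qPoch b Q (N - k) =
        ∑' k, f N k := fun N => by
    rw [tsum_eq_sum (s := range (N + 1)) fun k hk => if_neg (by simpa [Nat.lt_succ_iff] using hk)]
    refine sum_congr rfl fun k hk => ?_
    rw [if_pos (Nat.lt_succ_iff.mp (mem_range.mp hk))]
    ring
  have hP := tendsto_qPoch Q hQ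
  have hPinv := hP.inv₀ (qPochInf_ne_zero hQ hQ)
  have hA := tendsto_qPoch b hQ
  have hlim : ∀ k, Tendsto (fun N => f N k) atTop
      (𝓝 (z ^ k * (qPoch Q Q k)⁻¹ * qPochInf b Q)) := fun k => by
    have hshift := tendsto_sub_atTop_nat k
    have h := hP.mul ((hPinv.comp hshift).mul (hA.comp hshift))
    rw [← mul_assoc, mul_inv_cancel₀ (qPochInf_ne_zero hQ hQ), one_mul] at h
    refine (h.const_mul (z ^ k * (qPoch Q Q k)⁻¹)).congr' ?_
    filter_upwards [eventually_ge_atTop k] with N hN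
    simp only [f, if_pos hN, Function.comp, mul_assoc]
  obtain ⟨CP, hCP⟩ := exists_norm_le_of_tendsto hP
  obtain ⟨CI, hCI⟩ := exists_norm_le_of_tendsto hPinv
  obtain ⟨CA, hCA⟩ := exists_norm_le_of_tendsto hA
  have hbound : ∀ N k, ‖f N k‖ ≤ CI * (CP * CI * CA) * ‖z‖ ^ k := fun N k => by
    have := (norm_nonneg _).trans (hCI 0)
    have := (norm_nonneg _).trans (hCP 0)
    have := (norm_nonneg _).trans (hCA 0)
    by_cases hk : k ≤ N
    · simp only [f, if_pos hk, norm_mul, norm_pow]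
      calc _ ≤ ‖z‖ ^ k * CI * (CP * CI * CA) := by
            gcongr
            exacts [hCI k, hCP N, hCI (N - k), hCA (N - k)]
        _ = _ := by ring
    · simp only [f, if_neg hk, norm_zero]
      positivity
  have h := tendsto_tsum_of_dominated_convergence
    ((summable_geometric_of_lt_one (norm_nonneg z) hz).mul_left _) hlim (.of_forall hbound)
  simp only [← hsum, ← div_eq_mul_inv, tsum_mul_right] at h
  rwa [← eulerQExp, eulerQExp_eq_inv_qPochInf hQ hz, inv_mul_eq_div] at h

theorem limit_T0_sum (q : ℂ) (hq : ‖q‖ < 1) :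
    Tendsto
      (fun N => ∑ k ∈ range (N + 1),
        q ^ k * (qPoch (q ^ 3) (q ^ 3) N /
            (qPoch (q ^ 3) (q ^ 3) k * qPoch (q ^ 3) (q ^ 3) (N - k))) *
          qPoch (-q ^ 2) (q ^ 3) (N - k))
      atTop
      (nhds (1 / ((∏' i : ℕ, (1 - q ^ 2 * (q ^ 3) ^ i)) *
        (∏' i : ℕ, (1 - q * (q ^ 6) ^ i))))) := by
  have hpow : ∀ n ≠ 0, ‖q ^ n‖ < 1 := fun n hn => by
    rw [norm_pow]; exact pow_lt_one₀ (norm_nonneg q) hq hn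
  have hsplit : qPochInf q (q ^ 3) = qPochInf q (q ^ 6) * qPochInf (q ^ 4) (q ^ 6) := by
    rw [← qPochInf_sq_mul_qPochInf_sq q (hpow 3 (by norm_num))]
    ring_nf
  have hpair :
      qPochInf (-q ^ 2) (q ^ 3) * qPochInf (q ^ 2) (q ^ 3) = qPochInf (q ^ 4) (q ^ 6) := by
    rw [qPochInf_neg_mul_qPochInf _ (hpow 3 (by norm_num))]
    ring_nf
  have hA : qPochInf (-q ^ 2) (q ^ 3) ≠ 0 :=
    qPochInf_ne_zero (by simpa using hpow 2 (by norm_num)) (hpow 3 (by norm_num))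
  convert tendsto_sum_qBinomial_mul_qPoch (hpow 3 (by norm_num)) hq (-q ^ 2) using 2
  show 1 / (qPochInf (q ^ 2) (q ^ 3) * qPochInf q (q ^ 6)) = _ / qPochInf q (q ^ 3)
  rw [hsplit, ← hpair]
  field_simp
end
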